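/- For every admissible subgroup L of ℤ × ℤ, the rhombitrihexagonal torus graph G(L) — the edge graph of the semi-equivelar map of type {6,4,3,4} on the torus determined by L — is Hamiltonian. -/

import Mathlib

/-- `e₁ = (1,0)` in `ℤ × ℤ`. -/
def e₁ : ℤ × ℤ := (1, 0)

/-- `e₂ = (0,1)` in `ℤ × ℤ`. -/
def e₂ : ℤ × ℤ := (0, 1)

/-- A subgroup `L ≤ ℤ × ℤ` is admissible if it has finite index and contains no nonzero
vector `(v₁, v₂)` with `|v₁| ≤ 2` and `|v₂| ≤ 2`. -/
def Admissible (L : AddSubgroup (ℤ × ℤ)) : Prop :=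
  Finite ((ℤ × ℤ) ⧸ L) ∧ ∀ v ∈ L, v ≠ 0 → ¬(|v.1| ≤ 2 ∧ |v.2| ≤ 2)

/-- A graph is Hamiltonian if it contains a cycle visiting every vertex (exactly once:
a cycle repeats no vertex other than its basepoint). -/
def SimpleGraph.Hamiltonian {α : Type*} (G : SimpleGraph α) : Prop :=
  ∃ (a : α) (p : G.Walk a a), p.IsCycle ∧ ∀ v, v ∈ p.support

/-- The six direction vectors `d : ℤ/6 → ℤ × ℤ`:
`d₀ = (1,0)`, `d₁ = (0,1)`, `d₂ = (−1,1)`, `d₃ = (−1,0)`, `d₄ = (0,−1)`, `d₅ = (1,−1)`. -/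
def d : Fin 6 → ℤ × ℤ := ![(1, 0), (0, 1), (-1, 1), (-1, 0), (0, -1), (1, -1)]

/-- The edge relation of the rhombitrihexagonal graph over an abelian group `A`, with
direction vectors `D : ℤ/6 → A` (second coordinates are taken mod 6). -/
def rhombiTriHexRel {A : Type*} [AddCommGroup A] (D : Fin 6 → A) :
    A × Fin 6 → A × Fin 6 → Prop := fun u v =>
  (∃ (x : A) (t : Fin 6), u = (x, t) ∧ v = (x, t + 1)) ∨
  (∃ (x : A) (t : Fin 6), u = (x, t) ∧ v = (x + D t, t + 4))

/-- The rhombitrihexagonal graph over an abelian group `A`. -/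
def rhombiTriHexGraph {A : Type*} [AddCommGroup A] (D : Fin 6 → A) :
    SimpleGraph (A × Fin 6) :=
  SimpleGraph.fromRel (rhombiTriHexRel D)

/-- The rhombitrihexagonal torus graph `G(L)`, the edge graph of the semi-equivelar map
of type `{6,4,3,4}` on the torus determined by `L`. -/
def rhombiTriHexTorusGraph (L : AddSubgroup (ℤ × ℤ)) :
    SimpleGraph (((ℤ × ℤ) ⧸ L) × Fin 6) :=
  rhombiTriHexGraph (fun t => QuotientAddGroup.mk (d t))

/-!
The Hamiltonian cycle is grown one hexagon at a time, starting from a single hexagon. If the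
cycle runs through exactly the hexagons over `S`, `x ∈ S` and `y = x + D t ∉ S`, the hexagon
edge `(x, t)(x, t + 1)` is replaced by the path
`(x, t), (y, t + 4), (y, t + 5), (y, t), (y, t + 1), (y, t + 2), (y, t + 3), (x, t + 1)`,
which uses the two squares between the hexagons `x` and `y` and absorbs all six vertices of `y`.
Hexagon edges facing a hexagon outside `S` are never removed by such a step, so it can be
repeated; as the `D t` generate the group and `D (t + 3) = -D t`, it only stops once every
hexagon is covered.
-/

namespace SimpleGraph.Walk

variable {V : Type*} {G : SimpleGraph V}

lemma mem_support_iff_mem_tail_support {v z : V} {c : G.Walk v v} (hc : ¬c.Nil) :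
    z ∈ c.support ↔ z ∈ c.support.tail := by
  refine ⟨fun hz => ?_, List.mem_of_mem_tail⟩
  rw [← c.cons_tail_support, List.mem_cons] at hz
  exact hz.elim (fun h => h ▸ end_mem_tail_support hc) id

lemma IsCycle.exists_isPath_snd {a : V} {c : G.Walk a a} (hc : c.IsCycle) :
    ∃ q : G.Walk c.snd a, q.IsPath ∧ (∀ z, z ∈ q.support ↔ z ∈ c.support) ∧
      ∀ e ∈ c.edges, e ≠ s(a, c.snd) → e ∈ q.edges := by
  refine ⟨c.tail, hc.isPath_tail, fun z => ?_, fun e he hne => ?_⟩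
  · rw [support_tail_of_not_nil c hc.not_nil, mem_support_iff_mem_tail_support hc.not_nil]
  · rw [← c.cons_tail_eq hc.not_nil, edges_cons] at he
    exact (List.mem_cons.mp he).resolve_left hne

lemma IsCycle.eq_snd_or_eq_penultimate {a b : V} {c : G.Walk a a} (hc : c.IsCycle)
    (he : s(a, b) ∈ c.edges) : b = c.snd ∨ b = c.penultimate := by
  cases c with
  | nil => exact absurd hc not_isCycle_nil
  | cons h p =>
    rw [cons_isCycle_iff] at hc
    rw [edges_cons, List.mem_cons] at he
    rcases he with he | he
    · exact Or.inl (by simpa using Sym2.congr_right.mp he)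
    · have hp : ¬p.Nil := edges_eq_nil.not.mp (List.ne_nil_of_mem he)
      exact Or.inr ((penultimate_cons_of_not_nil h p hp).symm ▸
        hc.1.eq_penultimate_of_mem_edges he)

lemma IsCycle.exists_isPath_of_mem_edges_of_start {a b : V} {c : G.Walk a a}
    (hc : c.IsCycle) (he : s(a, b) ∈ c.edges) :
    ∃ q : G.Walk b a, q.IsPath ∧ (∀ z, z ∈ q.support ↔ z ∈ c.support) ∧
      ∀ e ∈ c.edges, e ≠ s(a, b) → e ∈ q.edges := by
  rcases hc.eq_snd_or_eq_penultimate he with rfl | rfl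
  · exact hc.exists_isPath_snd
  · have key := hc.reverse.exists_isPath_snd
    rw [snd_reverse] at key
    obtain ⟨q, hq, hsupp, hedges⟩ := key
    refine ⟨q, hq, fun z => by rw [hsupp, support_reverse, List.mem_reverse],
      fun e he hne => hedges e (by rwa [edges_reverse, List.mem_reverse]) hne⟩

lemma IsCycle.exists_isPath_of_mem_edges [DecidableEq V] {v a b : V} {c : G.Walk v v}
    (hc : c.IsCycle) (he : s(a, b) ∈ c.edges) :
    ∃ q : G.Walk b a, q.IsPath ∧ (∀ z, z ∈ q.support ↔ z ∈ c.support) ∧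
      ∀ e ∈ c.edges, e ≠ s(a, b) → e ∈ q.edges := by
  have ha := c.fst_mem_support_of_mem_edges he
  have hedges := (c.rotate_edges a ha).perm
  obtain ⟨q, hq, hsupp, hqedges⟩ :=
    (hc.rotate ha).exists_isPath_of_mem_edges_of_start (hedges.mem_iff.mpr he)
  refine ⟨q, hq, fun z => ?_, fun e he hne => hqedges e (hedges.mem_iff.mpr he) hne⟩
  rw [hsupp, mem_support_iff_mem_tail_support (hc.rotate ha).not_nil,
    (c.support_rotate a ha).perm.mem_iff, ← mem_support_iff_mem_tail_support hc.not_nil]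

lemma IsCycle.exists_isCycle_splice [DecidableEq V] {v a b : V} {c : G.Walk v v}
    (hc : c.IsCycle) (he : s(a, b) ∈ c.edges) {r : G.Walk a b} (hr : r.IsPath)
    (hlen : 1 < r.length) (hdisj : ∀ z ∈ r.support, z ∈ c.support → z = a ∨ z = b) :
    ∃ c' : G.Walk a a, c'.IsCycle ∧ (∀ z, z ∈ c'.support ↔ z ∈ c.support ∨ z ∈ r.support) ∧
      (∀ e ∈ c.edges, e ≠ s(a, b) → e ∈ c'.edges) ∧ ∀ e ∈ r.edges, e ∈ c'.edges := by
  obtain ⟨q, hq, hsupp, hedges⟩ := hc.exists_isPath_of_mem_edges he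
  have hdisj' : r.support.tail.Disjoint q.support.tail := by
    intro z hzr hzq
    rcases hdisj z (List.mem_of_mem_tail hzr) ((hsupp z).mp (List.mem_of_mem_tail hzq))
      with rfl | rfl
    · exact (List.nodup_cons.mp (r.cons_tail_support ▸ hr.support_nodup)).1 hzr
    · exact (List.nodup_cons.mp (q.cons_tail_support ▸ hq.support_nodup)).1 hzq
  refine ⟨r.append q, hr.isCycle_append hq hdisj' (Or.inl hlen), fun z => ?_,
    fun e he hne => ?_, fun e he => ?_⟩
  · rw [mem_support_append_iff, hsupp, or_comm]
  · rw [edges_append]; exact List.mem_append_right _ (hedges e he hne)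
  · rw [edges_append]; exact List.mem_append_left _ he

end SimpleGraph.Walk

theorem Set.eq_univ_of_forall_add_mem {G : Type*} [AddGroup G] {T S : Set G}
    (hT : AddSubgroup.closure T = ⊤) (hneg : ∀ g ∈ T, -g ∈ T) (hS : S.Nonempty)
    (hadd : ∀ x ∈ S, ∀ g ∈ T, x + g ∈ S) : S = univ := by
  obtain ⟨x₀, hx₀⟩ := hS
  have key : ∀ g ∈ AddSubgroup.closure T, ∀ x ∈ S, x + g ∈ S := by
    intro g hg
    induction hg using AddSubgroup.closure_induction'' with
    | mem g hg => exact fun x hx => hadd x hx g hg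
    | neg_mem g hg => exact fun x hx => hadd x hx _ (hneg g hg)
    | zero => exact fun x hx => by rwa [add_zero]
    | add g h _ _ ihg ihh => exact fun x hx => add_assoc x g h ▸ ihh _ (ihg x hx)
  refine eq_univ_of_forall fun a => ?_
  simpa using key (-x₀ + a) (hT ▸ AddSubgroup.mem_top _) x₀ hx₀

lemma sym2_mk_succ_eq_iff {α : Type*} {x x' : α} {t t' : Fin 6} :
    s(((x, t) : α × Fin 6), (x, t + 1)) = s((x', t'), (x', t' + 1)) ↔ x = x' ∧ t = t' := by
  simp only [Sym2.eq_iff, Prod.mk.injEq]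
  constructor
  · rintro (⟨h, -⟩ | ⟨⟨-, h₁⟩, -, h₂⟩)
    · exact h
    · omega
  · rintro ⟨rfl, rfl⟩
    simp

namespace rhombiTriHexGraph

open SimpleGraph Walk

variable {A : Type*} [AddCommGroup A] {D : Fin 6 → A}

lemma adj_succ {x : A} {s s' : Fin 6} (hs : s' = s + 1) :
    (rhombiTriHexGraph D).Adj (x, s) (x, s') := by
  subst hs
  rw [rhombiTriHexGraph, fromRel_adj]
  exact ⟨by simp, Or.inl (Or.inl ⟨x, s, rfl, rfl⟩)⟩

lemma adj_add {x y : A} {s s' : Fin 6} (hy : y = x + D s) (hs : s' = s + 4) :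
    (rhombiTriHexGraph D).Adj (x, s) (y, s') := by
  subst hy hs
  rw [rhombiTriHexGraph, fromRel_adj]
  exact ⟨by simp, Or.inl (Or.inr ⟨x, s, rfl, rfl⟩)⟩

variable (D) in
def hexagon (x : A) : (rhombiTriHexGraph D).Walk (x, 0) (x, 0) :=
  cons (adj_succ (s' := 1) rfl) <| cons (adj_succ (s' := 2) rfl) <|
  cons (adj_succ (s' := 3) rfl) <| cons (adj_succ (s' := 4) rfl) <|
  cons (adj_succ (s' := 5) rfl) <| cons (adj_succ (s' := 0) rfl) nil

def detour (hD : ∀ t, D (t + 3) = -D t) (x : A) (t : Fin 6) :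
    (rhombiTriHexGraph D).Walk (x, t) (x, t + 1) :=
  cons (adj_add (y := x + D t) rfl rfl) <|
  cons (adj_succ (s' := t + 5) (by omega)) <|
  cons (adj_succ (s' := t) (by omega)) <|
  cons (adj_succ (s' := t + 1) rfl) <|
  cons (adj_succ (s' := t + 2) (by omega)) <|
  cons (adj_succ (s' := t + 3) (by omega)) <|
  cons (adj_add (by rw [hD, add_neg_cancel_right]) (by omega)) nil

section Detour

variable (hD : ∀ t, D (t + 3) = -D t) (x : A) (t : Fin 6)

lemma support_detour : (detour hD x t).support =
    [(x, t), (x + D t, t + 4), (x + D t, t + 5), (x + D t, t), (x + D t, t + 1),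
      (x + D t, t + 2), (x + D t, t + 3), (x, t + 1)] := rfl

lemma mem_support_detour_iff {z : A × Fin 6} :
    z ∈ (detour hD x t).support ↔ z = (x, t) ∨ z = (x, t + 1) ∨ z.1 = x + D t := by
  obtain ⟨y, s⟩ := z
  rw [support_detour]
  simp only [List.mem_cons, List.not_mem_nil, or_false, Prod.mk.injEq]
  grind

lemma isPath_detour (ht : D t ≠ 0) : (detour hD x t).IsPath := by
  rw [isPath_def, support_detour]
  simp [Prod.ext_iff, ht]

lemma mem_edges_detour {s : Fin 6} (hs : s ≠ t + 3) :
    s(((x + D t, s) : A × Fin 6), (x + D t, s + 1)) ∈ (detour hD x t).edges := by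
  have : s = t + 4 ∨ s = t + 5 ∨ s = t ∨ s = t + 1 ∨ s = t + 2 := by omega
  rcases this with rfl | rfl | rfl | rfl | rfl <;> simp [detour] <;> omega

end Detour

variable (D) in
def ExtendableCycleOn (S : Finset A) : Prop :=
  ∃ (v : A × Fin 6) (c : (rhombiTriHexGraph D).Walk v v), c.IsCycle ∧
    (∀ z, z ∈ c.support ↔ z.1 ∈ S) ∧
    ∀ x ∈ S, ∀ t, x + D t ∉ S → s(((x, t) : A × Fin 6), (x, t + 1)) ∈ c.edges

lemma extendableCycleOn_singleton (x : A) : ExtendableCycleOn D {x} := by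
  refine ⟨_, hexagon D x, ?_, fun z => ?_, fun x' hx' t _ => ?_⟩
  · simp [hexagon, cons_isCycle_iff, isPath_def]
  · obtain ⟨y, s⟩ := z
    fin_cases s <;> simp [hexagon, eq_comm]
  · rw [Finset.mem_singleton.mp hx']
    fin_cases t <;> simp [hexagon]

lemma ExtendableCycleOn.insert [DecidableEq A] (hD : ∀ t, D (t + 3) = -D t) {S : Finset A}
    (hS : ExtendableCycleOn D S) {x : A} (hx : x ∈ S) {t : Fin 6} (hy : x + D t ∉ S) :
    ExtendableCycleOn D (insert (x + D t) S) := by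
  obtain ⟨v, c, hc, hsupp, hedges⟩ := hS
  have ht : D t ≠ 0 := fun h => hy (by rwa [h, add_zero])
  have hdisj : ∀ z ∈ (detour hD x t).support, z ∈ c.support → z = (x, t) ∨ z = (x, t + 1) := by
    intro z hz hzc
    rcases (mem_support_detour_iff hD x t).mp hz with h | h | h
    exacts [Or.inl h, Or.inr h, absurd (h ▸ (hsupp z).mp hzc) hy]
  obtain ⟨c', hc', hsupp', hkept, hnew⟩ := hc.exists_isCycle_splice (hedges x hx t hy)
    (isPath_detour hD x t ht) (by simp [detour]) hdisj
  refine ⟨_, c', hc', fun z => ?_, fun x' hx' t' hy' => ?_⟩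
  · rw [hsupp', hsupp, mem_support_detour_iff, Finset.mem_insert]
    constructor
    · rintro (h | rfl | rfl | h)
      exacts [Or.inr h, Or.inr hx, Or.inr hx, Or.inl h]
    · rintro (h | h)
      exacts [Or.inr (Or.inr (Or.inr h)), Or.inl h]
  · rcases Finset.mem_insert.mp hx' with rfl | hx'
    · refine hnew _ (mem_edges_detour hD x t fun h => hy' ?_)
      rw [h, hD, add_neg_cancel_right]
      exact Finset.mem_insert_of_mem hx
    · refine hkept _ (hedges x' hx' t' fun h => hy' (Finset.mem_insert_of_mem h)) fun h => ?_
      obtain ⟨rfl, rfl⟩ := sym2_mk_succ_eq_iff.mp h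
      exact hy' (Finset.mem_insert_self _ _)

end rhombiTriHexGraph

open rhombiTriHexGraph in
theorem rhombiTriHexGraph_hamiltonian {A : Type*} [AddCommGroup A] [Finite A] {D : Fin 6 → A}
    (hD : ∀ t, D (t + 3) = -D t) (hgen : AddSubgroup.closure (Set.range D) = ⊤) :
    (rhombiTriHexGraph D).Hamiltonian := by
  classical
  have := Fintype.ofFinite A
  obtain ⟨S, hS, hmax⟩ := Finset.exists_max_image
    (Finset.univ.filter (ExtendableCycleOn D)) Finset.card
    ⟨{0}, Finset.mem_filter.mpr ⟨Finset.mem_univ _, extendableCycleOn_singleton 0⟩⟩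
  replace hS := (Finset.mem_filter.mp hS).2
  have hclosed : ∀ x ∈ S, ∀ t, x + D t ∈ S := by
    by_contra! ⟨x, hx, t, hy⟩
    have := hmax _ (Finset.mem_filter.mpr ⟨Finset.mem_univ _, hS.insert hD hx hy⟩)
    rw [Finset.card_insert_of_notMem hy] at this
    omega
  obtain ⟨v, c, hc, hsupp, -⟩ := hS
  have hS_univ : (S : Set A) = Set.univ :=
    Set.eq_univ_of_forall_add_mem hgen (by rintro _ ⟨t, rfl⟩; exact ⟨t + 3, hD t⟩)
      ⟨v.1, (hsupp v).mp c.start_mem_support⟩ (by rintro x hx _ ⟨t, rfl⟩; exact hclosed x hx t)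
  exact ⟨v, c, hc, fun z => (hsupp z).mpr (Set.eq_univ_iff_forall.mp hS_univ z.1)⟩

lemma d_add_three (t : Fin 6) : d (t + 3) = -d t := by
  revert t
  decide

lemma closure_range_d : AddSubgroup.closure (Set.range d) = ⊤ := by
  refine eq_top_iff.mpr fun v _ => ?_
  have hv : v = v.1 • e₁ + v.2 • e₂ := by simp [e₁, e₂]
  have h₁ : e₁ ∈ AddSubgroup.closure (Set.range d) := AddSubgroup.subset_closure ⟨0, rfl⟩
  have h₂ : e₂ ∈ AddSubgroup.closure (Set.range d) := AddSubgroup.subset_closure ⟨1, rfl⟩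
  rw [hv]
  exact add_mem (zsmul_mem h₁ _) (zsmul_mem h₂ _)

/-- Every rhombitrihexagonal torus graph (type `{6,4,3,4}`) is Hamiltonian. -/
theorem rhombiTriHexTorusGraph_hamiltonian (L : AddSubgroup (ℤ × ℤ)) (hL : Admissible L) :
    (rhombiTriHexTorusGraph L).Hamiltonian := by
  have : Finite ((ℤ × ℤ) ⧸ L) := hL.1
  refine rhombiTriHexGraph_hamiltonian (fun t => by simp [d_add_three]) ?_
  rw [← QuotientAddGroup.coe_mk', Set.range_comp', ← AddMonoidHom.map_closure, closure_range_d,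
    AddSubgroup.map_top_of_surjective _ (QuotientAddGroup.mk'_surjective L)]
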